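/- Let M, Δ₀⁺, Δ₀⁻, F₀, R₀', S₀, Δ_m' be real polynomials, set Δ₀ := Δ₀⁺·Δ₀⁻ and M_m := F₀·M·R₀' + Δ₀⁻·S₀, and let y, u, u_c : ℝ → ℝ be infinitely differentiable. Assume that for all t: (M(D)y)(t) = (Δ₀(D)u)(t) and (F₀(D)((Δ₀⁺R₀')(D)u))(t) = (Δ_m'(D)u_c)(t) − (S₀(D)y)(t). Then for all t: ((Δ₀⁺·M_m)(D)y)(t) = ((Δ₀⁺·Δ₀⁻·Δ_m')(D)u_c)(t); that is, up to the cancelled factor Δ₀⁺, the closed loop matches the reference model M_m(D)y_m = Δ_m(D)u_c with Δ_m = Δ₀⁻·Δ_m'. -/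

import Mathlib

open Polynomial

/-- The constant-coefficient differential operator `p(D)` associated with a real
polynomial `p`, applied to a scalar function `f`. -/
noncomputable def polyD (p : Polynomial ℝ) (f : ℝ → ℝ) : ℝ → ℝ :=
  fun t => ∑ i ∈ Finset.range (p.natDegree + 1), p.coeff i * iteratedDeriv i f t

private lemma contDiff_iteratedDeriv' {f : ℝ → ℝ} (hf : ContDiff ℝ (⊤ : ℕ∞) f) (n : ℕ) :
    ContDiff ℝ (⊤ : ℕ∞) (iteratedDeriv n f) := by
  induction n with
  | zero => simpa using hf
  | succ n ih =>
    rw [iteratedDeriv_succ]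
    exact (contDiff_infty_iff_deriv.mp ih).2

private lemma contDiff_polyD {f : ℝ → ℝ} (hf : ContDiff ℝ (⊤ : ℕ∞) f) (p : Polynomial ℝ) :
    ContDiff ℝ (⊤ : ℕ∞) (polyD p f) := by
  unfold polyD
  exact ContDiff.sum fun i _ => contDiff_const.mul (contDiff_iteratedDeriv' hf i)

private lemma polyD_eq_sum (p : Polynomial ℝ) (f : ℝ → ℝ) {N : ℕ} (h : p.natDegree < N)
    (t : ℝ) :
    polyD p f t = ∑ i ∈ Finset.range N, p.coeff i * iteratedDeriv i f t := by
  refine Finset.sum_subset (Finset.range_subset_range.2 h) ?_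
  intro i hi hni
  have : p.natDegree < i := by
    simp only [Finset.mem_range, not_lt] at hni
    omega
  rw [Polynomial.coeff_eq_zero_of_natDegree_lt this, zero_mul]

private lemma polyD_add (p q : Polynomial ℝ) (f : ℝ → ℝ) (t : ℝ) :
    polyD (p + q) f t = polyD p f t + polyD q f t := by
  set N := (p + q).natDegree + p.natDegree + q.natDegree + 1 with hN
  have h1 : (p + q).natDegree < N := by omega
  have h2 : p.natDegree < N := by omega
  have h3 : q.natDegree < N := by omega
  rw [polyD_eq_sum (p + q) f h1 t, polyD_eq_sum p f h2 t, polyD_eq_sum q f h3 t]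
  simp [Polynomial.coeff_add, add_mul, Finset.sum_add_distrib]

private lemma polyD_C (a : ℝ) (g : ℝ → ℝ) (t : ℝ) : polyD (C a) g t = a * g t := by
  simp [polyD, Polynomial.natDegree_C]

private lemma polyD_C_mul (a : ℝ) (q : Polynomial ℝ) (f : ℝ → ℝ) (t : ℝ) :
    polyD (C a * q) f t = a * polyD q f t := by
  have h : (C a * q).natDegree < q.natDegree + 1 :=
    Nat.lt_succ_of_le (Polynomial.natDegree_C_mul_le a q)
  rw [polyD_eq_sum (C a * q) f h t]
  unfold polyD
  rw [Finset.mul_sum]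
  exact Finset.sum_congr rfl fun i _ => by rw [Polynomial.coeff_C_mul]; ring

private lemma polyD_X_mul (q : Polynomial ℝ) (g : ℝ → ℝ) (t : ℝ) :
    polyD (X * q) g t = polyD q (deriv g) t := by
  have h : (X * q).natDegree < q.natDegree + 1 + 1 := by
    have := Polynomial.natDegree_mul_le (p := (X : Polynomial ℝ)) (q := q)
    have hX : (X : Polynomial ℝ).natDegree = 1 := Polynomial.natDegree_X
    omega
  rw [polyD_eq_sum (X * q) g h t]
  rw [Finset.sum_range_succ']
  have h0 : (X * q).coeff 0 = 0 := by
    rw [Polynomial.mul_coeff_zero, Polynomial.coeff_X_zero, zero_mul]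
  rw [h0, zero_mul, add_zero]
  unfold polyD
  refine Finset.sum_congr rfl fun i _ => ?_
  rw [Polynomial.coeff_X_mul, iteratedDeriv_succ']

private lemma deriv_polyD {f : ℝ → ℝ} (hf : ContDiff ℝ (⊤ : ℕ∞) f) (p : Polynomial ℝ) :
    deriv (polyD p f) = polyD p (deriv f) := by
  funext t
  unfold polyD
  rw [deriv_fun_sum (fun i _ => ((contDiff_const.mul (contDiff_iteratedDeriv' hf i)).differentiable
    (by simp)).differentiableAt)]
  refine Finset.sum_congr rfl fun i _ => ?_
  rw [deriv_const_mul _ (((contDiff_iteratedDeriv' hf i).differentiable (by simp)).differentiableAt),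
    ← iteratedDeriv_succ, iteratedDeriv_succ']

private lemma polyD_mul (p q : Polynomial ℝ) :
    ∀ f : ℝ → ℝ, ContDiff ℝ (⊤ : ℕ∞) f → ∀ t : ℝ,
      polyD (p * q) f t = polyD p (polyD q f) t := by
  induction p using Polynomial.induction_on with
  | C a =>
    intro f hf t
    rw [polyD_C_mul, polyD_C]
  | add p₁ p₂ ih₁ ih₂ =>
    intro f hf t
    rw [add_mul, polyD_add, polyD_add, ih₁ f hf t, ih₂ f hf t]
  | monomial n a ih =>
    intro f hf t
    have e1 : C a * X ^ (n + 1) * q = X * (C a * X ^ n * q) := by ring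
    have e2 : C a * X ^ (n + 1) = X * (C a * X ^ n) := by ring
    have hdf : ContDiff ℝ (⊤ : ℕ∞) (deriv f) := (contDiff_infty_iff_deriv.mp hf).2
    rw [e1, e2, polyD_X_mul, polyD_X_mul, ih (deriv f) hdf t, ← deriv_polyD hf q]

private lemma polyD_sub {g h : ℝ → ℝ} (hg : ContDiff ℝ (⊤ : ℕ∞) g)
    (hh : ContDiff ℝ (⊤ : ℕ∞) h) (p : Polynomial ℝ) (t : ℝ) :
    polyD p (fun s => g s - h s) t = polyD p g t - polyD p h t := by
  unfold polyD
  rw [← Finset.sum_sub_distrib]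
  refine Finset.sum_congr rfl fun i _ => ?_
  have : iteratedDeriv i (fun s => g s - h s) t = iteratedDeriv i g t - iteratedDeriv i h t := by
    have : (fun s => g s - h s) = g - h := rfl
    rw [this, ← iteratedDerivWithin_univ, ← iteratedDerivWithin_univ, ← iteratedDerivWithin_univ,
      iteratedDerivWithin_sub (n := i) (Set.mem_univ t) uniqueDiffOn_univ
        (hg.contDiffWithinAt.of_le (by exact_mod_cast le_top))
        (hh.contDiffWithinAt.of_le (by exact_mod_cast le_top))]
  rw [this]
  ring

/-- Model-matching identity of Theorem 3(iii) for the delay-free numerator case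
(with the controller polynomial choices (25.a)–(25.b)). -/
theorem model_matching_identity
    (M Δ₀p Δ₀m F₀ R₀' S₀ Δm' : Polynomial ℝ)
    (Δ₀ Mm : Polynomial ℝ)
    (hΔ₀ : Δ₀ = Δ₀p * Δ₀m)
    (hMm : Mm = F₀ * M * R₀' + Δ₀m * S₀)
    (y u u_c : ℝ → ℝ)
    (hy : ContDiff ℝ (⊤ : ℕ∞) y) (hu : ContDiff ℝ (⊤ : ℕ∞) u) (huc : ContDiff ℝ (⊤ : ℕ∞) u_c)
    (hplant : ∀ t : ℝ, polyD M y t = polyD Δ₀ u t)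
    (hctrl : ∀ t : ℝ,
        polyD F₀ (fun s => polyD (Δ₀p * R₀') u s) t
          = polyD Δm' u_c t - polyD S₀ y t) :
    ∀ t : ℝ, polyD (Δ₀p * Mm) y t = polyD (Δ₀p * Δ₀m * Δm') u_c t := by
  intro t
  have hy' : ContDiff ℝ (⊤ : ℕ∞) y := hy.of_le (by simp)
  have hu' : ContDiff ℝ (⊤ : ℕ∞) u := hu.of_le (by simp)
  have huc' : ContDiff ℝ (⊤ : ℕ∞) u_c := huc.of_le (by simp)
  -- plant equation as a function equality
  have hplant' : polyD M y = polyD (Δ₀p * Δ₀m) u := by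
    funext s; rw [hplant s, hΔ₀]
  -- controller equation as a function equality
  have hctrl' : polyD (F₀ * (Δ₀p * R₀')) u
      = fun s => polyD Δm' u_c s - polyD S₀ y s := by
    funext s
    rw [polyD_mul F₀ (Δ₀p * R₀') u hu' s]
    exact hctrl s
  -- apply polyD (Δ₀m * Δ₀p) to the controller equation
  have key : ∀ s : ℝ, polyD (Δ₀m * Δ₀p * (F₀ * (Δ₀p * R₀'))) u s
      = polyD (Δ₀m * Δ₀p * Δm') u_c s - polyD (Δ₀m * Δ₀p * S₀) y s := by
    intro s
    rw [polyD_mul (Δ₀m * Δ₀p) (F₀ * (Δ₀p * R₀')) u hu' s, hctrl',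
      polyD_sub (contDiff_polyD huc' Δm') (contDiff_polyD hy' S₀) (Δ₀m * Δ₀p) s,
      ← polyD_mul (Δ₀m * Δ₀p) Δm' u_c huc' s, ← polyD_mul (Δ₀m * Δ₀p) S₀ y hy' s]
  -- rewrite the LHS of `key` through the plant equation
  have lhs : ∀ s : ℝ, polyD (Δ₀m * Δ₀p * (F₀ * (Δ₀p * R₀'))) u s
      = polyD (Δ₀p * (F₀ * M * R₀')) y s := by
    intro s
    have e1 : Δ₀m * Δ₀p * (F₀ * (Δ₀p * R₀')) = (F₀ * Δ₀p * R₀') * (Δ₀p * Δ₀m) := by ring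
    have e2 : Δ₀p * (F₀ * M * R₀') = (F₀ * Δ₀p * R₀') * M := by ring
    rw [e1, e2, polyD_mul (F₀ * Δ₀p * R₀') (Δ₀p * Δ₀m) u hu' s,
      polyD_mul (F₀ * Δ₀p * R₀') M y hy' s, hplant']
  -- split the goal's LHS
  have split : polyD (Δ₀p * Mm) y t
      = polyD (Δ₀p * (F₀ * M * R₀')) y t + polyD (Δ₀m * Δ₀p * S₀) y t := by
    have e : Δ₀p * Mm = Δ₀p * (F₀ * M * R₀') + Δ₀m * Δ₀p * S₀ := by rw [hMm]; ring
    rw [e, polyD_add]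
  have efin : Δ₀p * Δ₀m * Δm' = Δ₀m * Δ₀p * Δm' := by ring
  rw [efin]
  linarith [key t, lhs t, split]
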